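/- Assume s is special for S with parameter α and that more than ε·|S|/2 vertices of S are blue. Then the probability that a μ-random walk is heavy is at least ε·α·|S|/(8·(ℓ+1)). -/

import Mathlib

open MeasureTheory SimpleGraph

namespace CF

variable {V : Type} [Fintype V] [DecidableEq V]

/-- The subgraph of `G` induced on the vertex set `S` (kept as a graph on `V`). -/
def inducedSub (G : SimpleGraph V) (S : Set V) : SimpleGraph V where
  Adj u v := u ∈ S ∧ v ∈ S ∧ G.Adj u v
  symm := ⟨fun u v h => ⟨h.2.1, h.1, h.2.2.symm⟩⟩
  loopless := ⟨fun v h => G.irrefl h.2.2⟩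

/-- The space of walks in `G` starting at `s` of length at most `ℓ`
(a lazy walk of length `ℓ` induces such a walk after deleting self-loops). -/
def WalkSpace (G : SimpleGraph V) (s : V) (ℓ : ℕ) : Type :=
  Σ t : V, {w : G.Walk s t // w.length ≤ ℓ}

instance (G : SimpleGraph V) (s : V) (ℓ : ℕ) : MeasurableSpace (WalkSpace G s ℓ) := ⊤

variable {G : SimpleGraph V} {s : V} {ℓ : ℕ}

/-- The walk `W` reaches the vertex `v`. -/
def Reaches (W : WalkSpace G s ℓ) (v : V) : Prop := v ∈ W.2.1.support

/-- The simple path from `s` to `v` induced by a walk `W` reaching `v`: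
truncate `W` at its first visit to `v` and delete retraced segments. -/
def inducedPath (W : WalkSpace G s ℓ) (v : V) (h : Reaches W v) : G.Walk s v :=
  (W.2.1.takeUntil v h).bypass

/-- `s` is special for `S` with parameter `α`: every vertex of `S` is reached
by a `μ`-random walk with probability at least `α`. -/
def Special (μ : Measure (WalkSpace G s ℓ)) (S : Finset V) (α : ℝ) : Prop :=
  ∀ v ∈ S, α ≤ (μ {W | Reaches W v}).toReal

/-- `P` is a dominant path to `v`: `P` is a simple path from `s` to `v`, more than half of
the probability mass of walks reaching `v` induce `P` at `v`, and the probability of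
reaching `v` inducing a path different from `P` is less than `α/2`. -/
def IsDominantPath (μ : Measure (WalkSpace G s ℓ)) (α : ℝ) (v : V) (P : G.Walk s v) : Prop :=
  P.IsPath ∧
    (μ {W | Reaches W v}).toReal / 2 <
      (μ {W | ∃ h : Reaches W v, inducedPath W v h = P}).toReal ∧
    (μ {W | ∃ h : Reaches W v, inducedPath W v h ≠ P}).toReal < α / 2

/-- `v` is isolated: it has a dominant path. -/
def Isolated (μ : Measure (WalkSpace G s ℓ)) (α : ℝ) (v : V) : Prop :=
  ∃ P : G.Walk s v, IsDominantPath μ α v P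

/-- The directed edge `⟨u,v⟩` of `G_S` is dominant. -/
def Dominant (μ : Measure (WalkSpace G s ℓ)) (S : Finset V) (α : ℝ) (u v : V) : Prop :=
  u ∈ S ∧ v ∈ S ∧ G.Adj u v ∧ Isolated μ α v ∧
    (μ {W | ∃ h : Reaches W v, s(u, v) ∉ (inducedPath W v h).edges}).toReal < α / 2

/-- The undirected edge `(u,v)` of `G_S` is recessive. -/
def Recessive (μ : Measure (WalkSpace G s ℓ)) (S : Finset V) (α : ℝ) (u v : V) : Prop :=
  u ∈ S ∧ v ∈ S ∧ G.Adj u v ∧ ¬ Dominant μ S α u v ∧ ¬ Dominant μ S α v u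

/-- Two walks form a cycle if the subgraph of `G` induced on the union of their
vertex sets contains a cycle. -/
def FormsCycle (W W' : WalkSpace G s ℓ) : Prop :=
  ¬ (inducedSub G ({v | Reaches W v} ∪ {v | Reaches W' v})).IsAcyclic

/-- `cyc_W`: the probability that an independent `μ`-random walk forms a cycle with `W`. -/
noncomputable def cycProb (μ : Measure (WalkSpace G s ℓ)) (W : WalkSpace G s ℓ) : ℝ :=
  (μ {W' | FormsCycle W W'}).toReal

/-- `W` is heavy if `cyc_W > 1/√n`. -/
def Heavy (μ : Measure (WalkSpace G s ℓ)) (W : WalkSpace G s ℓ) : Prop :=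
  1 / Real.sqrt (Fintype.card V) < cycProb μ W

/-- `W` is light if it is not heavy. -/
def Light (μ : Measure (WalkSpace G s ℓ)) (W : WalkSpace G s ℓ) : Prop := ¬ Heavy μ W

/-- `q^H_v`: the probability that a `μ`-random walk is heavy and reaches `v`. -/
noncomputable def qH (μ : Measure (WalkSpace G s ℓ)) (v : V) : ℝ :=
  (μ {W | Heavy μ W ∧ Reaches W v}).toReal

/-- `v` is blue if `q^H_v > α/4`. -/
def Blue (μ : Measure (WalkSpace G s ℓ)) (α : ℝ) (v : V) : Prop := α / 4 < qH μ v

/-- The event `E_w` on a pair of independent walks: both walks are light and either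
(i) both reach `w` and induce distinct paths at `w`, or (ii) one reaches `w`, the other
reaches a `G_S`-neighbor `u` of `w`, and the edge sets of the two induced paths together
with the edge `(u,w)` contain a cycle. -/
def EventE (μ : Measure (WalkSpace G s ℓ)) (S : Finset V) (w : V)
    (p : WalkSpace G s ℓ × WalkSpace G s ℓ) : Prop :=
  Light μ p.1 ∧ Light μ p.2 ∧
    ((∃ (h1 : Reaches p.1 w) (h2 : Reaches p.2 w),
        inducedPath p.1 w h1 ≠ inducedPath p.2 w h2) ∨
      (∃ u, u ∈ S ∧ w ∈ S ∧ G.Adj u w ∧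
        ((∃ (h1 : Reaches p.1 w) (h2 : Reaches p.2 u),
            ¬ (SimpleGraph.fromEdgeSet
                ({e | e ∈ (inducedPath p.1 w h1).edges} ∪
                  {e | e ∈ (inducedPath p.2 u h2).edges} ∪ {s(u, w)})).IsAcyclic) ∨
          (∃ (h1 : Reaches p.2 w) (h2 : Reaches p.1 u),
            ¬ (SimpleGraph.fromEdgeSet
                ({e | e ∈ (inducedPath p.2 w h1).edges} ∪
                  {e | e ∈ (inducedPath p.1 u h2).edges} ∪ {s(u, w)})).IsAcyclic))))

end CF

/-! Double counting: a walk visits at most `ℓ + 1` vertices, so summing `q^H_v` over the blue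
vertices counts each heavy walk at most `ℓ + 1` times, while each of the more than `ε|S|/2` blue
vertices contributes more than `α/4`. -/

open Finset

open scoped Classical in
theorem MeasureTheory.sum_measure_le_mul_measure_univ_of_card_le {Ω ι : Type*} [MeasurableSpace Ω]
    (μ : Measure Ω) {B : Finset ι} {E : ι → Set Ω} (hE : ∀ i ∈ B, MeasurableSet (E i)) {k : ℕ}
    (hk : ∀ x, #{i ∈ B | x ∈ E i} ≤ k) :
    ∑ i ∈ B, μ (E i) ≤ k * μ Set.univ := by
  calc ∑ i ∈ B, μ (E i) = ∑ i ∈ B, ∫⁻ x, (E i).indicator 1 x ∂μ :=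
        sum_congr rfl fun i hi => (lintegral_indicator_one (hE i hi)).symm
    _ = ∫⁻ x, ∑ i ∈ B, (E i).indicator 1 x ∂μ :=
        (lintegral_finsetSum' B fun i hi => (measurable_one.indicator (hE i hi)).aemeasurable).symm
    _ ≤ ∫⁻ _, (k : ENNReal) ∂μ := lintegral_mono fun x => by
        simpa [Set.indicator_apply, sum_boole] using hk x
    _ = k * μ Set.univ := lintegral_const _

namespace CF

variable {V : Type} [DecidableEq V] {G : SimpleGraph V} {s : V} {ℓ : ℕ}

open scoped Classical in
theorem card_filter_reaches_le (W : WalkSpace G s ℓ) (B : Finset V) :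
    #{v ∈ B | Reaches W v} ≤ ℓ + 1 :=
  calc #{v ∈ B | Reaches W v}
      ≤ W.2.1.support.toFinset.card :=
        card_le_card fun _ hv => List.mem_toFinset.2 (mem_filter.1 hv).2
    _ ≤ W.2.1.support.length := List.toFinset_card_le _
    _ = W.2.1.length + 1 := W.2.1.length_support
    _ ≤ ℓ + 1 := Nat.add_le_add_right W.2.2 1

theorem sum_qH_le [Fintype V] (μ : Measure (WalkSpace G s ℓ)) [IsFiniteMeasure μ] (B : Finset V) :
    ∑ v ∈ B, qH μ v ≤ (ℓ + 1) * (μ {W | Heavy μ W}).toReal := by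
  have hsum := sum_measure_le_mul_measure_univ_of_card_le (μ.restrict {W | Heavy μ W}) (B := B)
    (E := fun v => {W | Reaches W v}) (fun _ _ => MeasurableSpace.measurableSet_top)
    fun W => card_filter_reaches_le W B
  simp only [Measure.restrict_apply MeasurableSpace.measurableSet_top] at hsum
  have := ENNReal.toReal_mono (by finiteness) hsum
  rw [ENNReal.toReal_sum (fun _ _ => by finiteness), ENNReal.toReal_mul, ENNReal.toReal_natCast] at this
  simpa [qH, Set.ofPred_and, Set.inter_comm] using this

end CF

theorem stmt5_general {V : Type} [Fintype V] [DecidableEq V]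
    (G : SimpleGraph V)
    (ε : ℝ)
    (S : Finset V) (s : V) (ℓ : ℕ)
    (μ : MeasureTheory.Measure (CF.WalkSpace G s ℓ)) [MeasureTheory.IsProbabilityMeasure μ]
    (α : ℝ) (hα : 0 < α)
    (hblue : ε * S.card / 2 < ({v | v ∈ S ∧ CF.Blue μ α v}.ncard : ℝ)) :
    ε * α * S.card / (8 * (ℓ + 1)) ≤ (μ {W | CF.Heavy μ W}).toReal := by
  classical
  set B := S.filter (CF.Blue μ α)
  have hB : {v | v ∈ S ∧ CF.Blue μ α v}.ncard = #B := by
    rw [← Set.ncard_coe_finset, coe_filter]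
  have hqH : #B • (α / 4) ≤ ∑ v ∈ B, CF.qH μ v :=
    card_nsmul_le_sum B (CF.qH μ) (α / 4) fun v hv => (mem_filter.1 hv).2.le
  rw [div_le_iff₀ (by positivity)]
  calc ε * α * S.card = 2 * α * (ε * S.card / 2) := by ring
    _ ≤ 2 * α * #B := by rw [← hB]; gcongr
    _ = 8 * (#B • (α / 4)) := by rw [nsmul_eq_mul]; ring
    _ ≤ 8 * ((ℓ + 1) * (μ {W | CF.Heavy μ W}).toReal) := by grw [hqH, CF.sum_qH_le μ B]
    _ = (μ {W | CF.Heavy μ W}).toReal * (8 * (ℓ + 1)) := by ring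

/-- If more than `ε·|S|/2` vertices of `S` are blue, then the probability that
a `μ`-random walk is heavy is at least `ε·α·|S|/(8(ℓ+1))`. -/
theorem stmt5 {V : Type} [Fintype V] [DecidableEq V]
    (G : SimpleGraph V) [DecidableRel G.Adj] (d : ℕ) (hd : 1 ≤ d)
    (hdeg : ∀ v, G.degree v ≤ d)
    (ε : ℝ) (hε0 : 0 < ε) (hε1 : ε < 1)
    (S : Finset V) (s : V) (hs : s ∈ S) (ℓ : ℕ)
    (μ : MeasureTheory.Measure (CF.WalkSpace G s ℓ)) [MeasureTheory.IsProbabilityMeasure μ]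
    (α : ℝ) (hα : 0 < α) (hspec : CF.Special μ S α)
    (hblue : ε * S.card / 2 < ({v | v ∈ S ∧ CF.Blue μ α v}.ncard : ℝ)) :
    ε * α * S.card / (8 * (ℓ + 1)) ≤ (μ {W | CF.Heavy μ W}).toReal :=
  stmt5_general G ε S s ℓ μ α hα hblue
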